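/- For every plane rooted tree T of size n, the number of increasing labellings of T equals n! divided by the product over all subtrees S of T of |S| (the hook-length formula for trees). -/

import Mathlib

inductive PlaneTree : Type where
  | node : List PlaneTree → PlaneTree

namespace PlaneTree

mutual
  /-- number of nodes of a plane rooted tree -/
  def size : PlaneTree → ℕ
    | .node ts => 1 + sizeAux ts
  def sizeAux : List PlaneTree → ℕ
    | [] => 0
    | t :: ts => size t + sizeAux ts
end

mutual
  /-- product of the sizes of all subtrees (hook product) -/
  def hookProd : PlaneTree → ℕ
    | .node ts => size (.node ts) * hookProdAux ts
  def hookProdAux : List PlaneTree → ℕ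
    | [] => 1
    | t :: ts => hookProd t * hookProdAux ts
end

end PlaneTree

/-- plane rooted trees with labelled nodes -/
inductive LTree : Type where
  | node : ℕ → List LTree → LTree

namespace LTree

def rootLabel : LTree → ℕ
  | .node a _ => a

mutual
  /-- labels strictly increase along every root-to-leaf path -/
  def inc : LTree → Prop
    | .node a ts => incAux a ts
  def incAux : ℕ → List LTree → Prop
    | _, [] => True
    | a, t :: ts => (a < rootLabel t ∧ inc t) ∧ incAux a ts
end

mutual
  def labels : LTree → List ℕ
    | .node a ts => a :: labelsAux ts
  def labelsAux : List LTree → List ℕ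
    | [] => []
    | t :: ts => labels t ++ labelsAux ts
end

mutual
  /-- the underlying (unlabelled) plane tree -/
  def shape : LTree → PlaneTree
    | .node _ ts => .node (shapeAux ts)
  def shapeAux : List LTree → List PlaneTree
    | [] => []
    | t :: ts => shape t :: shapeAux ts
end

end LTree

/-- Increasing plane rooted trees of size `n`: increasing labelled plane trees whose
multiset of labels is exactly `{1, …, n}`. -/
def IncTreeSet (n : ℕ) : Set LTree :=
  {t | t.inc ∧ (t.labels).Perm (List.range' 1 n)}

/-- the number of increasing plane rooted trees of size `n` -/
noncomputable def numInc (n : ℕ) : ℕ := (IncTreeSet n).ncard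

/-- the number of increasing labellings of a given plane rooted tree `T` -/
noncomputable def numIncLab (T : PlaneTree) : ℕ :=
  {t : LTree | t.shape = T ∧ t.inc ∧ (t.labels).Perm (List.range' 1 T.size)}.ncard

/-- the number of plane rooted trees of size `n` -/
noncomputable def treeCount (n : ℕ) : ℕ := {T : PlaneTree | T.size = n}.ncard

/-!
We count increasing labellings of a plane tree by an arbitrary finite label set `S ⊆ ℕ`,
not only by `{1, …, n}`. Splitting off the first subtree `t₀` of the root: the root carries
the least label `a` of `S`, and the labelling is the same as an increasing labelling of `t₀`
by any `|t₀|`-subset `A` of `S \ {a}` together with one of the root with its other subtrees by `S \ A`.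
So the count is `C(n - 1, |t₀|)` times the counts for the two smaller trees, whatever `S` is,
and induction gives `count * hookProd = n!`, because
`hookProd (node (t₀ :: ts)) * |node ts| = n * hookProd t₀ * hookProd (node ts)`.
-/

open scoped Nat

namespace PlaneTree

@[elab_as_elim]
theorem node_cons_induction {motive : PlaneTree → Prop} (nil : motive (node []))
    (cons : ∀ t ts, motive t → motive (node ts) → motive (node (t :: ts))) :
    ∀ T, motive T
  | node [] => nil
  | node (t :: ts) =>
      cons t ts (node_cons_induction nil cons t) (node_cons_induction nil cons (node ts))

theorem size_pos : ∀ T : PlaneTree, 0 < T.size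
  | node _ => by rw [size]; omega

theorem size_node_nil : (node []).size = 1 := rfl

theorem hookProd_node_nil : (node []).hookProd = 1 := rfl

theorem size_node_cons (t : PlaneTree) (ts : List PlaneTree) :
    (node (t :: ts)).size = t.size + (node ts).size := by
  simp only [size, sizeAux]; omega

theorem hookProd_node_cons_mul_size (t : PlaneTree) (ts : List PlaneTree) :
    (node (t :: ts)).hookProd * (node ts).size =
      (node (t :: ts)).size * t.hookProd * (node ts).hookProd := by
  simp only [hookProd, hookProdAux]; ring

end PlaneTree

namespace LTree

@[elab_as_elim]
theorem node_cons_induction {motive : LTree → Prop} (nil : ∀ a, motive (node a []))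
    (cons : ∀ a u us, motive u → motive (node a us) → motive (node a (u :: us))) :
    ∀ t, motive t
  | node a [] => nil a
  | node a (u :: us) =>
      cons a u us (node_cons_induction nil cons u) (node_cons_induction nil cons (node a us))

theorem rootLabel_mem_labels : ∀ t : LTree, t.rootLabel ∈ t.labels
  | node a ts => by simp [labels, rootLabel]

theorem length_labels (t : LTree) : t.labels.length = t.shape.size := by
  induction t using node_cons_induction with
  | nil a => simp [labels, labelsAux, shape, shapeAux, PlaneTree.size, PlaneTree.sizeAux]
  | cons a u us hu hus =>
    simp only [labels, labelsAux, shape, shapeAux, PlaneTree.size, PlaneTree.sizeAux,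
      List.length_cons, List.length_append] at hu hus ⊢
    omega

theorem rootLabel_le_of_inc {t : LTree} (ht : t.inc) {b : ℕ} (hb : b ∈ t.labels) :
    t.rootLabel ≤ b := by
  induction t using node_cons_induction with
  | nil a => simp_all [labels, labelsAux, rootLabel]
  | cons a u us hu hus =>
    simp only [inc, incAux, rootLabel] at ht hu hus ⊢
    simp only [labels, labelsAux, List.mem_cons, List.mem_append] at hb hus
    rcases hb with rfl | hb | hb
    · rfl
    · exact (ht.1.1.trans_le (hu ht.1.2 hb)).le
    · exact hus ht.2 (Or.inr hb)

theorem eq_of_shape_eq_of_labels_eq {t t' : LTree} (hs : t.shape = t'.shape)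
    (hl : t.labels = t'.labels) : t = t' := by
  induction t using node_cons_induction generalizing t' with
  | nil a =>
    obtain ⟨a', _ | ⟨u', us'⟩⟩ := t'
    · simp_all [labels]
    · simp [shape, shapeAux] at hs
  | cons a u us hu hus =>
    obtain ⟨a', _ | ⟨u', us'⟩⟩ := t'
    · simp [shape, shapeAux] at hs
    simp only [shape, shapeAux, PlaneTree.node.injEq, List.cons.injEq] at hs
    simp only [labels, labelsAux, List.cons.injEq] at hl
    obtain ⟨hlu, hlus⟩ := List.append_inj hl.2 (by rw [length_labels, length_labels, hs.1])
    have hnode := hus (t' := node a' us') (by rw [shape, shape, hs.2])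
      (by rw [labels, labels, hl.1, hlus])
    cases hnode
    rw [hu hs.1 hlu]

def graft (u : LTree) : LTree → LTree
  | node a us => node a (u :: us)

theorem graft_injective {u u' v v' : LTree} (h : u.graft v = u'.graft v') : u = u' ∧ v = v' := by
  obtain ⟨a, us⟩ := v
  obtain ⟨a', us'⟩ := v'
  simp only [graft, node.injEq, List.cons.injEq] at h
  obtain ⟨rfl, rfl, rfl⟩ := h
  exact ⟨rfl, rfl⟩

theorem exists_eq_graft {t : LTree} {t₀ : PlaneTree} {ts : List PlaneTree}
    (h : t.shape = .node (t₀ :: ts)) : ∃ u v : LTree, t = u.graft v := by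
  obtain ⟨a, _ | ⟨u, us⟩⟩ := t
  · simp [shape, shapeAux] at h
  · exact ⟨u, node a us, rfl⟩

theorem shape_graft {u v : LTree} {t₀ : PlaneTree} {ts : List PlaneTree} :
    (u.graft v).shape = .node (t₀ :: ts) ↔ u.shape = t₀ ∧ v.shape = .node ts := by
  obtain ⟨a, us⟩ := v
  simp [graft, shape, shapeAux]

theorem labels_graft (u v : LTree) :
    ((u.graft v).labels : Multiset ℕ) = u.labels + v.labels := by
  obtain ⟨a, us⟩ := v
  simp only [graft, labels, labelsAux, Multiset.coe_add, Multiset.coe_eq_coe]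
  exact List.perm_middle.symm

theorem inc_graft {u v : LTree} : (u.graft v).inc ↔ v.rootLabel < u.rootLabel ∧ u.inc ∧ v.inc := by
  obtain ⟨a, us⟩ := v
  simp only [graft, inc, incAux, rootLabel]
  tauto

end LTree

namespace PlaneTree

open LTree

def incLabellings (T : PlaneTree) (S : Finset ℕ) : Set LTree :=
  {t | t.shape = T ∧ t.inc ∧ (t.labels : Multiset ℕ) = S.val}

theorem mem_labels_iff_of_mem_incLabellings {T : PlaneTree} {S : Finset ℕ} {t : LTree}
    (ht : t ∈ incLabellings T S) {x : ℕ} : x ∈ t.labels ↔ x ∈ S := by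
  rw [← Multiset.mem_coe, ht.2.2, Finset.mem_val]

theorem finite_incLabellings (T : PlaneTree) (S : Finset ℕ) : (incLabellings T S).Finite := by
  have hperm : {l : List ℕ | (l : Multiset ℕ) = S.val}.Finite := by
    refine (List.finite_toSet S.val.toList.permutations).subset fun l hl => ?_
    rw [Set.mem_ofPred_eq, ← Multiset.coe_toList S.val, Multiset.coe_eq_coe] at hl
    exact List.mem_permutations.2 hl
  refine Set.Finite.of_finite_image (f := labels) (hperm.subset ?_) fun t ht t' ht' h => ?_
  · rintro _ ⟨t, ht, rfl⟩
    exact ht.2.2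
  · exact eq_of_shape_eq_of_labels_eq (ht.1.trans ht'.1.symm) h

instance (T : PlaneTree) (S : Finset ℕ) : Finite (incLabellings T S) :=
  (finite_incLabellings T S).to_subtype

theorem incLabellings_node_nil (a : ℕ) : incLabellings (node []) {a} = {LTree.node a []} := by
  ext ⟨b, us⟩
  simp only [incLabellings, Set.mem_ofPred_eq, Set.mem_singleton_iff, LTree.node.injEq]
  constructor
  · rintro ⟨hs, -, hl⟩
    obtain rfl : us = [] := by cases us <;> simp_all [shape, shapeAux]
    simp_all [labels, labelsAux]
  · rintro ⟨rfl, rfl⟩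
    simp [shape, shapeAux, inc, incAux, labels, labelsAux]

section Graft

variable {t₀ : PlaneTree} {ts : List PlaneTree} {S : Finset ℕ} {a : ℕ} {u v : LTree}

theorem graft_mem_incLabellings (ha : IsLeast ↑S a) {A : Finset ℕ}
    (hA : A ∈ (S.erase a).powersetCard t₀.size) (hu : u ∈ incLabellings t₀ A)
    (hv : v ∈ incLabellings (node ts) (S \ A)) :
    u.graft v ∈ incLabellings (node (t₀ :: ts)) S := by
  have hAS : A ⊆ S.erase a := (Finset.mem_powersetCard.1 hA).1
  refine ⟨shape_graft.2 ⟨hu.1, hv.1⟩, inc_graft.2 ⟨?_, hu.2.1, hv.2.1⟩, ?_⟩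
  · have hav : a ∈ v.labels := (mem_labels_iff_of_mem_incLabellings hv).2 <|
      Finset.mem_sdiff.2 ⟨ha.1, fun haA => (Finset.mem_erase.1 (hAS haA)).1 rfl⟩
    have hua : u.rootLabel ∈ S.erase a :=
      hAS ((mem_labels_iff_of_mem_incLabellings hu).1 u.rootLabel_mem_labels)
    obtain ⟨hne, huS⟩ := Finset.mem_erase.1 hua
    exact (rootLabel_le_of_inc hv.2.1 hav).trans_lt (lt_of_le_of_ne (ha.2 huS) hne.symm)
  · rw [labels_graft, hu.2.2, hv.2.2, Finset.sdiff_val,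
      add_tsub_cancel_of_le (Finset.val_le_iff.2 (hAS.trans (S.erase_subset a)))]

theorem exists_of_graft_mem_incLabellings (ha : IsLeast ↑S a)
    (h : u.graft v ∈ incLabellings (node (t₀ :: ts)) S) :
    ∃ A ∈ (S.erase a).powersetCard t₀.size,
      u ∈ incLabellings t₀ A ∧ v ∈ incLabellings (node ts) (S \ A) := by
  obtain ⟨hsh, hinc, hlab⟩ := h
  obtain ⟨hushape, hvshape⟩ := shape_graft.1 hsh
  obtain ⟨hroot, huinc, hvinc⟩ := inc_graft.1 hinc
  rw [labels_graft] at hlab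
  have hle : (u.labels : Multiset ℕ) ≤ S.val := hlab ▸ Multiset.le_add_right _ _
  let A : Finset ℕ := ⟨u.labels, Multiset.nodup_of_le hle S.nodup⟩
  have hvroot : v.rootLabel ∈ S := by
    rw [← Finset.mem_val, ← hlab]
    exact Multiset.mem_add.2 (Or.inr (Multiset.mem_coe.2 v.rootLabel_mem_labels))
  refine ⟨A, Finset.mem_powersetCard.2 ⟨fun x hx => Finset.mem_erase.2 ⟨?_, ?_⟩, ?_⟩,
    ⟨hushape, huinc, rfl⟩, ⟨hvshape, hvinc, ?_⟩⟩
  · have hx : x ∈ u.labels := Multiset.mem_coe.1 hx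
    exact ((ha.2 hvroot).trans_lt (hroot.trans_le (rootLabel_le_of_inc huinc hx))).ne'
  · exact Multiset.mem_of_le hle hx
  · rw [← hushape, ← length_labels]
    rfl
  · rw [Finset.sdiff_val, ← hlab]
    exact (add_tsub_cancel_left _ _).symm

theorem card_incLabellings_node_cons (ha : IsLeast ↑S a) :
    Nat.card (incLabellings (node (t₀ :: ts)) S) =
      ∑ A ∈ (S.erase a).powersetCard t₀.size,
        Nat.card (incLabellings t₀ A) * Nat.card (incLabellings (node ts) (S \ A)) := by
  let graftPair : (Σ A : (S.erase a).powersetCard t₀.size,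
      incLabellings t₀ A × incLabellings (node ts) (S \ A)) →
      incLabellings (node (t₀ :: ts)) S :=
    fun p => ⟨p.2.1.1.graft p.2.2.1, graft_mem_incLabellings ha p.1.2 p.2.1.2 p.2.2.2⟩
  have hbij : Function.Bijective graftPair := by
    constructor
    · rintro ⟨⟨A, hA⟩, ⟨u, hu⟩, ⟨v, hv⟩⟩ ⟨⟨A', hA'⟩, ⟨u', hu'⟩, ⟨v', hv'⟩⟩ h
      obtain ⟨rfl, rfl⟩ := graft_injective (congrArg Subtype.val h)
      obtain rfl : A = A' := Finset.val_inj.1 (hu.2.2.symm.trans hu'.2.2)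
      rfl
    · rintro ⟨t, ht⟩
      obtain ⟨u, v, rfl⟩ := exists_eq_graft ht.1
      obtain ⟨A, hA, hu, hv⟩ := exists_of_graft_mem_incLabellings ha ht
      exact ⟨⟨⟨A, hA⟩, ⟨u, hu⟩, ⟨v, hv⟩⟩, rfl⟩
  rw [← Nat.card_congr (Equiv.ofBijective graftPair hbij), Nat.card_sigma]
  simp only [Nat.card_prod]
  exact Finset.sum_coe_sort _ fun A =>
    Nat.card (incLabellings t₀ A) * Nat.card (incLabellings (node ts) (S \ A))

end Graft

theorem card_incLabellings_mul_hookProd (T : PlaneTree) {S : Finset ℕ} (hS : S.card = T.size) :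
    Nat.card (incLabellings T S) * T.hookProd = T.size ! := by
  induction T using node_cons_induction generalizing S with
  | nil =>
    obtain ⟨a, rfl⟩ := Finset.card_eq_one.1 hS
    simp [incLabellings_node_nil, hookProd_node_nil, size_node_nil]
  | cons t ts iht ihr =>
    obtain ⟨k, hk⟩ := Nat.exists_eq_add_one_of_ne_zero (node ts).size_pos.ne'
    have hne : S.Nonempty := Finset.card_pos.1 (hS ▸ (node (t :: ts)).size_pos)
    obtain ⟨a, ha⟩ : ∃ a, IsLeast (S : Set ℕ) a := ⟨_, S.isLeast_min' hne⟩
    have hcard : (S.erase a).card = t.size + k := by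
      rw [Finset.card_erase_of_mem ha.1, hS, size_node_cons, hk]; rfl
    have hterm : ∀ A ∈ (S.erase a).powersetCard t.size,
        Nat.card (incLabellings t A) * Nat.card (incLabellings (node ts) (S \ A)) *
          (t.hookProd * (node ts).hookProd) = t.size ! * (node ts).size ! := by
      intro A hA
      obtain ⟨hAS, hAcard⟩ := Finset.mem_powersetCard.1 hA
      have hrest : (S \ A).card = (node ts).size := by
        rw [Finset.card_sdiff_of_subset (hAS.trans (S.erase_subset a)), hS, hAcard,
          size_node_cons, Nat.add_sub_cancel_left]
      rw [← iht hAcard, ← ihr hrest]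
      ring
    apply Nat.eq_of_mul_eq_mul_right (node ts).size_pos
    calc Nat.card (incLabellings (node (t :: ts)) S) * (node (t :: ts)).hookProd * (node ts).size
        = (node (t :: ts)).size * ∑ A ∈ (S.erase a).powersetCard t.size,
            Nat.card (incLabellings t A) * Nat.card (incLabellings (node ts) (S \ A)) *
              (t.hookProd * (node ts).hookProd) := by
          rw [mul_assoc, hookProd_node_cons_mul_size, card_incLabellings_node_cons ha,
            Finset.sum_mul, Finset.mul_sum]
          exact Finset.sum_congr rfl fun A _ => by ring
      _ = (t.size + k + 1) * ((t.size + k).choose k * t.size ! * k !) * (k + 1) := by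
          rw [Finset.sum_congr rfl hterm, Finset.sum_const, Finset.card_powersetCard, hcard,
            size_node_cons, hk, smul_eq_mul, Nat.choose_symm_add, Nat.factorial_succ]
          ring
      _ = (node (t :: ts)).size ! * (node ts).size := by
          rw [Nat.add_choose_mul_factorial_mul_factorial, ← Nat.factorial_succ, size_node_cons, hk]
          rfl

end PlaneTree

theorem numIncLab_eq_card_incLabellings (T : PlaneTree) :
    numIncLab T = Nat.card (T.incLabellings (Finset.Icc 1 T.size)) := by
  rw [numIncLab, Nat.card_coe_set_eq]
  congr 1
  ext t
  simp only [PlaneTree.incLabellings, Set.mem_ofPred_eq, Nat.Icc_eq_range', Nat.add_sub_cancel,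
    Multiset.coe_eq_coe]

/-- Hook-length formula: for every plane rooted tree `T` of size `n`, the number of
increasing labellings of `T` equals `n!` divided by the product of the sizes of all
subtrees of `T`. -/
theorem hook_length_formula (T : PlaneTree) :
    numIncLab T = Nat.factorial T.size / T.hookProd := by
  have h := T.card_incLabellings_mul_hookProd (S := Finset.Icc 1 T.size) (by simp)
  rw [← numIncLab_eq_card_incLabellings] at h
  have hH : T.hookProd ≠ 0 := by
    rintro h0
    rw [h0, mul_zero] at h
    exact T.size.factorial_ne_zero h.symm
  exact Nat.eq_div_of_mul_eq_left hH h
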